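/- Let G be a finitely generated group with an orientation preserving action on the circle by homeomorphisms and let μ be a G-invariant Borel probability measure. If every group homomorphism G → (ℝ,+) is trivial (i.e., H^1(G,ℝ) = 0), then the commutator subgroup [G,G] acts with a global fixed point: there exists a point of the circle fixed by every element of [G,G]. -/

import Mathlib

noncomputable section

open MeasureTheory

/-- The circle `S¹ = ℝ/ℤ`. -/
abbrev 𝕊 : Type := AddCircle (1 : ℝ)

/-- `F : ℝ → ℝ` is a lift of the circle bijection `f` witnessing that `f` is an
orientation preserving homeomorphism of the circle: `F` is a strictly increasing
homeomorphism of `ℝ` (equivalently, continuous and strictly increasing) satisfying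
`F (x + 1) = F x + 1`, and projecting to `f`. -/
def IsOPLift (f : Equiv.Perm 𝕊) (F : ℝ → ℝ) : Prop :=
  Continuous F ∧ StrictMono F ∧ (∀ x : ℝ, F (x + 1) = F x + 1) ∧
    ∀ x : ℝ, f (x : 𝕊) = (F x : 𝕊)

/-- `f` is an orientation preserving homeomorphism of the circle. -/
def IsOPHomeo (f : Equiv.Perm 𝕊) : Prop := ∃ F : ℝ → ℝ, IsOPLift f F

/-- `F` is a lift witnessing that `f` is an orientation preserving `C¹` diffeomorphism
of the circle: an orientation preserving lift which is `C¹` with nowhere vanishing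
derivative. -/
def IsC1Lift (f : Equiv.Perm 𝕊) (F : ℝ → ℝ) : Prop :=
  IsOPLift f F ∧ ContDiff ℝ 1 F ∧ ∀ x : ℝ, deriv F x ≠ 0

/-- `f` is an orientation preserving `C¹` diffeomorphism of the circle, i.e. an element
of `Diff¹₊(S¹)`. -/
def IsC1Diffeo (f : Equiv.Perm 𝕊) : Prop := ∃ F : ℝ → ℝ, IsC1Lift f F

/-!
Choose lifts `L g` of the homeomorphisms `ρ g`. Since `μ` is invariant, the mean displacement
`∫ (L g x - x) dμ` is additive modulo `ℤ`, so its class in `ℝ/ℤ` defines a homomorphism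
`G → ℝ/ℤ`, which kills `[G, G]`. Hence every commutator has a lift with mean displacement zero.
That lift has a fixed point, which traps the lifted orbit of any other point in a monotone
sequence, so points moved by the commutator are not recurrent. By Poincaré recurrence the
commutator fixes `μ`-almost every point, hence every point of the (nonempty) support of `μ`.
-/

open Function Set Filter Topology

lemma AddCircle.coe_eq_coe_iff_exists_intCast {a b : ℝ} :
    (a : 𝕊) = b ↔ ∃ n : ℤ, a - b = n := by
  rw [← sub_eq_zero, ← AddCircle.coe_sub, AddCircle.coe_eq_zero_iff]
  simp [eq_comm]

lemma exists_intCast_forall_eq_of_continuous {X : Type*} [TopologicalSpace X]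
    [PreconnectedSpace X] [Nonempty X] {φ : X → ℝ} (hφ : Continuous φ)
    (hint : ∀ x, ∃ n : ℤ, φ x = n) : ∃ n : ℤ, ∀ x, φ x = n := by
  choose k hk using hint
  have hk_cont : Continuous k := by
    rw [Int.isClosedEmbedding_coe_real.continuous_iff]
    exact hφ.congr hk
  obtain ⟨x₀⟩ := ‹Nonempty X›
  exact ⟨k x₀, fun x => (hk x).trans (congrArg _ (PreconnectedSpace.constant ‹_› hk_cont))⟩

lemma Monotone.iterate_succ_mem_uIcc {α : Type*} [LinearOrder α] {F : α → α} (hF : Monotone F)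
    {w r : α} (hw : F w = w) (hr : F r ∈ uIcc r w) (n : ℕ) : F^[n + 1] r ∈ uIcc (F r) w := by
  have hmaps : MapsTo F (uIcc (F r) w) (uIcc (F r) w) := fun y hy => by
    have hFy := hF.mapsTo_uIcc hy
    rw [hw] at hFy
    exact uIcc_subset_uIcc (hw ▸ hF.mapsTo_uIcc hr) right_mem_uIcc hFy
  rw [iterate_succ_apply]
  exact hmaps.iterate n left_mem_uIcc

namespace IsOPLift

variable {f g : Equiv.Perm 𝕊} {F G : ℝ → ℝ} {μ : Measure 𝕊} [IsProbabilityMeasure μ]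

lemma semiconj (h : IsOPLift f F) : Semiconj ((↑) : ℝ → 𝕊) F f :=
  fun x => (h.2.2.2 x).symm

lemma continuous_perm (h : IsOPLift f F) : Continuous f := by
  rw [(QuotientAddGroup.isQuotientMap_mk _).continuous_iff]
  exact (funext h.2.2.2 : f ∘ ((↑) : ℝ → 𝕊) = _) ▸ (AddCircle.continuous_mk' 1).comp h.1

lemma mul (hf : IsOPLift f F) (hg : IsOPLift g G) : IsOPLift (f * g) (F ∘ G) :=
  ⟨hf.1.comp hg.1, hf.2.1.comp hg.2.1, fun x => by simp [hg.2.2.1, hf.2.2.1],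
    fun x => by simp [hg.2.2.2, hf.2.2.2]⟩

lemma sub_intCast (h : IsOPLift f F) (m : ℤ) : IsOPLift f (fun x => F x - m) :=
  ⟨h.1.sub continuous_const, fun _ _ hab => by simpa using h.2.1 hab,
    fun x => by simp only [h.2.2.1]; ring, fun x => by
      rw [h.2.2.2, AddCircle.coe_eq_coe_iff_exists_intCast]; exact ⟨m, by ring⟩⟩

lemma exists_intCast_eq_add {F' : ℝ → ℝ} (h : IsOPLift f F) (h' : IsOPLift f F') :
    ∃ n : ℤ, ∀ x, F' x = F x + n := by
  obtain ⟨n, hn⟩ := exists_intCast_forall_eq_of_continuous (h'.1.sub h.1) fun x =>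
    AddCircle.coe_eq_coe_iff_exists_intCast.mp ((h'.2.2.2 x).symm.trans (h.2.2.2 x))
  exact ⟨n, fun x => by linarith [show F' x - F x = n from hn x]⟩

lemma periodic_sub_id (h : IsOPLift f F) : Periodic (fun x => F x - x) 1 :=
  fun x => by simp only [h.2.2.1]; ring

def displacement (h : IsOPLift f F) : 𝕊 → ℝ := h.periodic_sub_id.lift

@[simp]
lemma displacement_coe (h : IsOPLift f F) (x : ℝ) : h.displacement x = F x - x :=
  h.periodic_sub_id.lift_coe x

lemma continuous_displacement (h : IsOPLift f F) : Continuous h.displacement := by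
  rw [(QuotientAddGroup.isQuotientMap_mk _).continuous_iff]
  exact (h.1.sub continuous_id :)

lemma displacement_sub_intCast (h : IsOPLift f F) (m : ℤ) (x : 𝕊) :
    (h.sub_intCast m).displacement x = h.displacement x - m := by
  obtain ⟨r, rfl⟩ := QuotientAddGroup.mk_surjective x
  simp only [displacement_coe]
  ring

lemma exists_mem_nhds_eventually_iterate_notMem (h : IsOPLift f F) {z : ℝ} (hz : F z = z)
    {x : 𝕊} (hx : f x ≠ x) : ∃ s ∈ 𝓝 x, ∀ᶠ n in atTop, f^[n] x ∉ s := by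
  obtain ⟨r, hr_Ico, rfl⟩ : ∃ r ∈ Ico z (z + 1), (r : 𝕊) = x :=
    ⟨_, (AddCircle.equivIco 1 z x).2, (AddCircle.equivIco 1 z).symm_apply_apply x⟩
  have hFr : F r ≠ r := fun e => hx (by rw [h.2.2.2, e])
  have hr : r ∈ Ioo z (z + 1) := by
    refine ⟨hr_Ico.1.lt_of_ne fun e => hx ?_, hr_Ico.2⟩
    rw [← e, h.2.2.2, hz]
  have hFr_mem : F r ∈ Ioo z (z + 1) :=
    ⟨hz ▸ h.2.1 hr.1, (show F (z + 1) = z + 1 by rw [h.2.2.1, hz]) ▸ h.2.1 hr.2⟩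
  -- `w` is the fixed endpoint of `[z, z + 1]` towards which the orbit of `r` moves.
  obtain ⟨w, hFw, hFr_between, hK⟩ : ∃ w, F w = w ∧ F r ∈ uIcc r w ∧
      uIcc (F r) w ⊆ Icc z (z + 1) := by
    rcases hFr.lt_or_gt with hlt | hgt
    · refine ⟨z, hz, mem_uIcc.2 (Or.inr ⟨hFr_mem.1.le, hlt.le⟩), uIcc_subset_Icc ?_ ?_⟩ <;>
        constructor <;> linarith [hFr_mem.1, hFr_mem.2]
    · refine ⟨z + 1, by rw [h.2.2.1, hz], mem_uIcc.2 (Or.inl ⟨hgt.le, hFr_mem.2.le⟩),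
        uIcc_subset_Icc ?_ ?_⟩ <;> constructor <;> linarith [hFr_mem.1, hFr_mem.2]
  have hr_notMem : r ∉ uIcc (F r) w := by
    rw [mem_uIcc] at hFr_between ⊢
    rcases hFr.lt_or_gt with hlt | hgt <;> rintro (⟨h₁, h₂⟩ | ⟨h₁, h₂⟩) <;>
      rcases hFr_between with ⟨h₃, h₄⟩ | ⟨h₃, h₄⟩ <;> linarith
  refine ⟨(((↑) : ℝ → 𝕊) '' uIcc (F r) w)ᶜ,
    (isCompact_uIcc.image (AddCircle.continuous_mk' 1)).isClosed.isOpen_compl.mem_nhds ?_,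
    eventually_atTop.2 ⟨1, fun n hn hmem => hmem ?_⟩⟩
  · rintro ⟨t, ht, htr⟩
    obtain ⟨k, hk⟩ := AddCircle.coe_eq_coe_iff_exists_intCast.mp htr
    have hk0 : k = 0 := by
      have ht' := hK ht
      have : |(k : ℝ)| < 1 := by
        rw [← hk, abs_lt]; constructor <;> linarith [ht'.1, ht'.2, hr.1, hr.2]
      exact Int.abs_lt_one_iff.mp (by exact_mod_cast this)
    rw [hk0, Int.cast_zero, sub_eq_zero] at hk
    exact hr_notMem (hk ▸ ht)
  · obtain ⟨m, rfl⟩ := Nat.exists_eq_add_of_le' hn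
    exact ⟨_, h.2.1.monotone.iterate_succ_mem_uIcc hFw hFr_between m,
      h.semiconj.iterate_right (m + 1) r⟩

lemma integrable_displacement (h : IsOPLift f F) : Integrable h.displacement μ :=
  h.continuous_displacement.integrable_of_hasCompactSupport (.of_compactSpace _)

lemma ae_apply_eq_self_of_integral_displacement_eq_zero (h : IsOPLift f F)
    (hμ : μ.map f = μ) (h₀ : ∫ x, h.displacement x ∂μ = 0) : ∀ᵐ x ∂μ, f x = x := by
  obtain ⟨u, hu⟩ := exists_le_integral (μ := μ) h.integrable_displacement
  obtain ⟨v, hv⟩ := exists_integral_le (μ := μ) h.integrable_displacement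
  obtain ⟨y, hy⟩ := intermediate_value_univ u v h.continuous_displacement ⟨h₀ ▸ hu, h₀ ▸ hv⟩
  obtain ⟨z, rfl⟩ := QuotientAddGroup.mk_surjective y
  have hz : F z = z := by
    have := h.displacement_coe z
    rw [← sub_eq_zero, ← this, hy]
  have hrec := (MeasurePreserving.conservative ⟨h.continuous_perm.measurable, hμ⟩
    ).ae_frequently_mem_of_mem_nhds
  filter_upwards [hrec] with x hx
  by_contra hfx
  obtain ⟨s, hs, hns⟩ := h.exists_mem_nhds_eventually_iterate_notMem hz hfx
  exact ((hx s hs).and_eventually hns).exists.elim fun _ hn => hn.2 hn.1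

lemma support_subset_fixedPoints_of_integral_displacement_eq_zero (h : IsOPLift f F)
    (hμ : μ.map f = μ) (h₀ : ∫ x, h.displacement x ∂μ = 0) : μ.support ⊆ fixedPoints f := by
  have hclosed : IsClosed (fixedPoints f) := isClosed_eq h.continuous_perm continuous_id
  exact Measure.support_subset_of_isClosed hclosed
    (h.ae_apply_eq_self_of_integral_displacement_eq_zero hμ h₀)

lemma support_subset_fixedPoints_of_integral_displacement_eq_intCast (h : IsOPLift f F)
    (hμ : μ.map f = μ) {m : ℤ} (hm : ∫ x, h.displacement x ∂μ = m) :
    μ.support ⊆ fixedPoints f := by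
  refine (h.sub_intCast m).support_subset_fixedPoints_of_integral_displacement_eq_zero hμ ?_
  simp only [h.displacement_sub_intCast]
  rw [integral_sub h.integrable_displacement (integrable_const _), hm, integral_const]
  simp

lemma integral_displacement_of_eq_comp_add {k : Equiv.Perm 𝕊} {H : ℝ → ℝ} (hf : IsOPLift f F)
    (hg : IsOPLift g G) (hk : IsOPLift k H) (hμ : μ.map g = μ) {n : ℤ}
    (hH : ∀ x, H x = F (G x) + n) :
    ∫ x, hk.displacement x ∂μ = ∫ x, hf.displacement x ∂μ + ∫ x, hg.displacement x ∂μ + n := by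
  have hdisp : ∀ x, hk.displacement x = hf.displacement (g x) + hg.displacement x + n := by
    intro x
    obtain ⟨r, rfl⟩ := QuotientAddGroup.mk_surjective x
    rw [hg.2.2.2 r]
    simp only [displacement_coe, hH]
    ring
  have hg_meas : AEMeasurable g μ := hg.continuous_perm.measurable.aemeasurable
  have hcomp : ∫ x, hf.displacement (g x) ∂μ = ∫ x, hf.displacement x ∂μ := by
    rw [← integral_map hg_meas hf.continuous_displacement.aestronglyMeasurable, hμ]
  have hcomp_int : Integrable (fun x => hf.displacement (g x)) μ := by
    refine Integrable.comp_aemeasurable ?_ hg_meas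
    rw [hμ]
    exact hf.integrable_displacement
  have hsum_int : Integrable (fun x => hf.displacement (g x) + hg.displacement x) μ :=
    hcomp_int.add hg.integrable_displacement
  simp only [hdisp]
  rw [integral_add hsum_int (integrable_const _),
    integral_add hcomp_int hg.integrable_displacement, hcomp, integral_const]
  simp

end IsOPLift

section MeanRotation

variable {Γ : Type*} [Group Γ] {ρ : Γ →* Equiv.Perm 𝕊} {L : Γ → ℝ → ℝ}
  {μ : Measure 𝕊} [IsProbabilityMeasure μ]

def meanRotationHom (hL : ∀ g, IsOPLift (ρ g) (L g)) (hinv : ∀ g, μ.map (ρ g) = μ) :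
    Γ →* Multiplicative 𝕊 :=
  MonoidHom.mk' (fun g => .ofAdd ((∫ x, (hL g).displacement x ∂μ : ℝ) : 𝕊)) fun a b => by
    obtain ⟨n, hn⟩ := ((hL a).mul (hL b)).exists_intCast_eq_add (map_mul ρ a b ▸ hL (a * b))
    rw [← ofAdd_add, (hL a).integral_displacement_of_eq_comp_add (hL b) (hL (a * b)) (hinv b) hn,
      ← AddCircle.coe_add]
    congr 1
    exact AddCircle.coe_eq_coe_iff_exists_intCast.mpr ⟨n, by ring⟩

lemma exists_intCast_integral_displacement_eq_of_mem_commutator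
    (hL : ∀ g, IsOPLift (ρ g) (L g)) (hinv : ∀ g, μ.map (ρ g) = μ) {g : Γ}
    (hg : g ∈ commutator Γ) : ∃ m : ℤ, ∫ x, (hL g).displacement x ∂μ = m := by
  have hker : meanRotationHom hL hinv g = 1 := Abelianization.commutator_subset_ker _ hg
  obtain ⟨m, hm⟩ :=
    (AddCircle.coe_eq_zero_iff (p := (1 : ℝ))).mp (congrArg Multiplicative.toAdd hker)
  exact ⟨m, by simpa using hm.symm⟩

end MeanRotation

theorem commutator_global_fixed_point_general
    (G : Type*) [Group G]
    (ρ : G →* Equiv.Perm 𝕊) (hop : ∀ g : G, IsOPHomeo (ρ g))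
    (μ : Measure 𝕊) [IsProbabilityMeasure μ]
    (hinv : ∀ g : G, Measure.map (ρ g) μ = μ) :
    ∃ x : 𝕊, ∀ g ∈ commutator G, ρ g x = x := by
  choose L hL using hop
  obtain ⟨x, hx⟩ := μ.nonempty_support (IsProbabilityMeasure.ne_zero μ)
  refine ⟨x, fun g hg => ?_⟩
  obtain ⟨m, hm⟩ := exists_intCast_integral_displacement_eq_of_mem_commutator hL hinv hg
  exact (hL g).support_subset_fixedPoints_of_integral_displacement_eq_intCast (hinv g) hm hx

/-- Let `G` be a finitely generated group with an orientation preserving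
action on the circle by homeomorphisms preserving a Borel probability measure `μ`.  If
every group homomorphism `G → (ℝ, +)` is trivial (i.e. `H¹(G, ℝ) = 0`), then the
commutator subgroup `[G, G]` acts with a global fixed point. -/
theorem commutator_global_fixed_point
    (G : Type*) [Group G] [Group.FG G]
    (ρ : G →* Equiv.Perm 𝕊) (hop : ∀ g : G, IsOPHomeo (ρ g))
    (μ : Measure 𝕊) [IsProbabilityMeasure μ]
    (hinv : ∀ g : G, Measure.map (ρ g) μ = μ)
    (h1 : ∀ φ : G →* Multiplicative ℝ, φ = 1) :
    ∃ x : 𝕊, ∀ g ∈ commutator G, ρ g x = x :=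
  commutator_global_fixed_point_general G ρ hop μ hinv
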